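/- (Lemma 8.6, dimension-lifting of velocity estimates) Let n ≥ 2 and k ≥ 2 be integers, T ≥ 1 an integer, and Ω > 0, σ > 0, m_min > 0 reals. Let u ∈ ℝ^k and let v_1, v_2 ∈ ℝ^k be unit vectors with 0 ≤ ⟨v_1, v_2⟩ ≤ cos((π/4)·(2/((n+1)(n+2)))^{1/(k−1)}). If for j = 1, 2 one has ‖P_{v_j^⊥}(u)‖₂ < d_{min,k−1}/2 and ‖P_{v_j^⊥}(u)‖₂ ≤ (C(k−1,n)/(TΩ)) · (π/(d_{min,k−1} T Ω))^{2n−2} · σ/m_min, then ‖u‖₂ < d_{min,k}/2 and ‖u‖₂ ≤ (C(k,n)/(TΩ)) · (π/(d_{min,k} T Ω))^{2n−2} · σ/m_min. -/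

import Mathlib

/-- `ξ(k) = Σ_{j=1}^k 1/j`, with `ξ(0) = 0`. -/
noncomputable def xiSum (k : ℕ) : ℝ := Finset.sum (Finset.Icc 1 k) (fun j => (1 : ℝ) / j)

/-- The threshold `d_{min,m}` of Lemma 8.6. -/
noncomputable def dminThreshold (n m T : ℕ) (Ω σ mmin : ℝ) : ℝ :=
  11.76 * Real.pi * Real.exp 1 * (4 : ℝ) ^ (m - 1) *
    (((n : ℝ) + 2) * ((n : ℝ) + 1) / 2) ^ xiSum (m - 1) / ((T : ℝ) * Ω) *
    (σ / mmin) ^ ((1 : ℝ) / (2 * (n : ℝ) - 1))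

/-- The constant `C(m,n)` of Lemma 8.6. -/
noncomputable def Cmn (m n : ℕ) : ℝ :=
  ((4 : ℝ) ^ (m - 1) * (((n : ℝ) + 2) * ((n : ℝ) + 1) / 2) ^ xiSum (m - 1)) ^ (2 * n - 1) *
    (n : ℝ) * 2 ^ (6 * n - 3) * Real.exp 1 ^ (2 * n) * Real.pi ^ (-(1 : ℝ) / 2)


/-!
If `u` lies within `ε` of both lines `ℝ v₁` and `ℝ v₂`, then projecting `⟪v₁, u⟫ v₁ = u - P_{v₁⊥} u`
onto `v₂ᗮ` shows `|⟪v₁, u⟫| sin θ ≤ 2ε`, where `θ` is the angle between `v₁` and `v₂`; Pythagoras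
then gives `‖u‖² sin² θ ≤ 5ε²`. The angle hypothesis and concavity of `sin` on `[0, π]` give
`sin θ ≥ x / √2` with `x = (2 / ((n+1)(n+2)))^(1/(k-1))`, so `‖u‖ ≤ √10 ε / x ≤ 4ε / x`.
Since `ξ(k-1) = ξ(k-2) + 1/(k-1)`, both `d_{min}` and the velocity bound grow by exactly the
factor `4 / x` from dimension `k - 1` to `k`.
-/

open Real Submodule
open scoped RealInnerProductSpace

theorem mul_sqrt_two_div_two_le_sin_pi_div_four_mul {x : ℝ} (hx₀ : 0 ≤ x) (hx₁ : x ≤ 1) :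
    x * (√2 / 2) ≤ sin (π / 4 * x) := by
  have h := strictConcaveOn_sin_Icc.concaveOn.2 (Set.left_mem_Icc.2 pi_pos.le)
    (show π / 4 ∈ Set.Icc 0 π from ⟨by positivity, by linarith [pi_pos]⟩)
    (sub_nonneg.2 hx₁) hx₀ (sub_add_cancel 1 x)
  simpa [sin_pi_div_four, mul_comm] using h

theorem sq_div_two_le_one_sub_sq_of_le_cos {x c : ℝ} (hx₀ : 0 ≤ x) (hx₁ : x ≤ 1) (hc₀ : 0 ≤ c)
    (hc : c ≤ cos (π / 4 * x)) : x ^ 2 / 2 ≤ 1 - c ^ 2 := by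
  have hsin := mul_sqrt_two_div_two_le_sin_pi_div_four_mul hx₀ hx₁
  have hsq : (x * (√2 / 2)) ^ 2 = x ^ 2 / 2 := by
    rw [mul_pow, div_pow, sq_sqrt zero_le_two]; ring
  have hsin_sq : x ^ 2 / 2 ≤ sin (π / 4 * x) ^ 2 := hsq ▸ by gcongr
  have hcos_sq : c ^ 2 ≤ cos (π / 4 * x) ^ 2 := by gcongr
  linarith [sin_sq_add_cos_sq (π / 4 * x)]

section Geometry

variable {E : Type*} [NormedAddCommGroup E] [InnerProductSpace ℝ E]

theorem norm_sq_eq_inner_sq_add_norm_sq_starProjection_orthogonal {v : E} (hv : ‖v‖ = 1)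
    (u : E) : ‖u‖ ^ 2 = ⟪v, u⟫ ^ 2 + ‖(ℝ ∙ v)ᗮ.starProjection u‖ ^ 2 := by
  rw [norm_sq_eq_add_norm_sq_starProjection u (ℝ ∙ v), starProjection_unit_singleton ℝ hv,
    norm_smul, hv, mul_one, Real.norm_eq_abs, sq_abs]

theorem abs_inner_mul_norm_starProjection_orthogonal_le {v₁ : E} (hv₁ : ‖v₁‖ = 1) (v₂ u : E) :
    |⟪v₁, u⟫| * ‖(ℝ ∙ v₂)ᗮ.starProjection v₁‖ ≤
      ‖(ℝ ∙ v₁)ᗮ.starProjection u‖ + ‖(ℝ ∙ v₂)ᗮ.starProjection u‖ := by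
  set P₁ := (ℝ ∙ v₁)ᗮ.starProjection
  set P₂ := (ℝ ∙ v₂)ᗮ.starProjection
  have hsplit : ⟪v₁, u⟫ • v₁ = u - P₁ u := by
    rw [starProjection_orthogonal_val, starProjection_unit_singleton ℝ hv₁, sub_sub_cancel]
  calc |⟪v₁, u⟫| * ‖P₂ v₁‖ = ‖P₂ u - P₂ (P₁ u)‖ := by
        rw [← map_sub, ← hsplit, map_smul, norm_smul, Real.norm_eq_abs]
    _ ≤ ‖P₂ u‖ + ‖P₂ (P₁ u)‖ := norm_sub_le _ _
    _ ≤ ‖P₂ u‖ + ‖P₁ u‖ := by grw [norm_starProjection_apply_le _ (P₁ u)]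
    _ = ‖P₁ u‖ + ‖P₂ u‖ := add_comm _ _

theorem norm_sq_mul_one_sub_inner_sq_le {v₁ v₂ : E} (hv₁ : ‖v₁‖ = 1) (hv₂ : ‖v₂‖ = 1) (u : E) :
    ‖u‖ ^ 2 * (1 - ⟪v₁, v₂⟫ ^ 2) ≤
      5 * max ‖(ℝ ∙ v₁)ᗮ.starProjection u‖ ‖(ℝ ∙ v₂)ᗮ.starProjection u‖ ^ 2 := by
  set p₁ := ‖(ℝ ∙ v₁)ᗮ.starProjection u‖
  set p₂ := ‖(ℝ ∙ v₂)ᗮ.starProjection u‖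
  set s := ‖(ℝ ∙ v₂)ᗮ.starProjection v₁‖
  have hs : 1 - ⟪v₁, v₂⟫ ^ 2 = s ^ 2 := by
    have := norm_sq_eq_inner_sq_add_norm_sq_starProjection_orthogonal hv₂ v₁
    rw [hv₁, real_inner_comm] at this
    linarith
  have hs1 : s ≤ 1 := hv₁ ▸ norm_starProjection_apply_le _ v₁
  have ha : |⟪v₁, u⟫| * s ≤ p₁ + p₂ := abs_inner_mul_norm_starProjection_orthogonal_le hv₁ v₂ u
  have hp₁ : p₁ ≤ max p₁ p₂ := le_max_left _ _
  have hp₂ : p₂ ≤ max p₁ p₂ := le_max_right _ _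
  have hsum : (p₁ + p₂) ^ 2 ≤ (2 * max p₁ p₂) ^ 2 := by gcongr; linarith
  rw [hs, norm_sq_eq_inner_sq_add_norm_sq_starProjection_orthogonal hv₁ u, ← sq_abs ⟪v₁, u⟫]
  have ha2 : (|⟪v₁, u⟫| * s) ^ 2 ≤ (p₁ + p₂) ^ 2 := by gcongr
  have hp2 : p₁ ^ 2 * s ^ 2 ≤ max p₁ p₂ ^ 2 := by
    calc p₁ ^ 2 * s ^ 2 ≤ p₁ ^ 2 * 1 := by gcongr; exact pow_le_one₀ (norm_nonneg _) hs1
      _ ≤ max p₁ p₂ ^ 2 := by rw [mul_one]; gcongr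
  nlinarith

theorem norm_le_four_div_mul_max_of_inner_le_cos {v₁ v₂ : E} (hv₁ : ‖v₁‖ = 1) (hv₂ : ‖v₂‖ = 1)
    {x : ℝ} (hx₀ : 0 < x) (hx₁ : x ≤ 1) (hc₀ : 0 ≤ ⟪v₁, v₂⟫) (hc : ⟪v₁, v₂⟫ ≤ cos (π / 4 * x))
    (u : E) :
    ‖u‖ ≤ 4 / x * max ‖(ℝ ∙ v₁)ᗮ.starProjection u‖ ‖(ℝ ∙ v₂)ᗮ.starProjection u‖ := by
  set M := max ‖(ℝ ∙ v₁)ᗮ.starProjection u‖ ‖(ℝ ∙ v₂)ᗮ.starProjection u‖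
  have hM : 0 ≤ M := le_max_of_le_left (norm_nonneg _)
  have hangle := sq_div_two_le_one_sub_sq_of_le_cos hx₀.le hx₁ hc₀ hc
  have hlift := norm_sq_mul_one_sub_inner_sq_le hv₁ hv₂ u
  have hsq : (‖u‖ * x) ^ 2 ≤ (4 * M) ^ 2 := by nlinarith [sq_nonneg ‖u‖]
  rw [div_mul_eq_mul_div, le_div_iff₀ hx₀]
  exact le_of_pow_le_pow_left₀ two_ne_zero (by positivity) hsq

end Geometry

theorem xiSum_succ (m : ℕ) : xiSum (m + 1) = xiSum m + 1 / ((m : ℝ) + 1) := by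
  rw [xiSum, xiSum, Finset.sum_Icc_succ_top (Nat.le_add_left 1 m)]
  push_cast
  rfl

noncomputable def angleScale (n k : ℕ) : ℝ :=
  (2 / (((n : ℝ) + 1) * ((n : ℝ) + 2))) ^ ((1 : ℝ) / ((k : ℝ) - 1))

theorem angleScale_pos (n k : ℕ) : 0 < angleScale n k := by
  unfold angleScale; positivity

theorem angleScale_le_one (n : ℕ) {k : ℕ} (hk : 1 ≤ k) : angleScale n k ≤ 1 := by
  have hk' : (1 : ℝ) ≤ k := by exact_mod_cast hk
  refine rpow_le_one (by positivity) ?_ (div_nonneg zero_le_one (by linarith))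
  rw [div_le_one (by positivity)]
  nlinarith

theorem four_pow_mul_rpow_xiSum_eq (n : ℕ) {k : ℕ} (hk : 2 ≤ k) :
    (4 : ℝ) ^ (k - 1) * (((n : ℝ) + 2) * ((n : ℝ) + 1) / 2) ^ xiSum (k - 1) =
      4 / angleScale n k *
        ((4 : ℝ) ^ (k - 1 - 1) * (((n : ℝ) + 2) * ((n : ℝ) + 1) / 2) ^ xiSum (k - 1 - 1)) := by
  obtain ⟨m, rfl⟩ : ∃ m, k = m + 2 := ⟨k - 2, by omega⟩
  have hR : 0 < ((n : ℝ) + 2) * ((n : ℝ) + 1) / 2 := by positivity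
  have hscale : angleScale n (m + 2) =
      ((((n : ℝ) + 2) * ((n : ℝ) + 1) / 2) ^ (1 / ((m : ℝ) + 1)))⁻¹ := by
    rw [angleScale, ← inv_rpow hR.le]
    congr 1
    · field_simp
    · push_cast; ring
  rw [show m + 2 - 1 = m + 1 from rfl, show m + 1 - 1 = m from rfl, xiSum_succ, rpow_add hR,
    hscale, div_inv_eq_mul, pow_succ]
  ring

theorem dminThreshold_eq_four_div_angleScale_mul (n : ℕ) {k : ℕ} (hk : 2 ≤ k) (T : ℕ)
    (Ω σ mmin : ℝ) :
    dminThreshold n k T Ω σ mmin = 4 / angleScale n k * dminThreshold n (k - 1) T Ω σ mmin := by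
  unfold dminThreshold
  rw [mul_assoc _ ((4 : ℝ) ^ (k - 1)), four_pow_mul_rpow_xiSum_eq n hk]
  ring

theorem Cmn_eq_four_div_angleScale_pow_mul (n : ℕ) {k : ℕ} (hk : 2 ≤ k) :
    Cmn k n = (4 / angleScale n k) ^ (2 * n - 1) * Cmn (k - 1) n := by
  unfold Cmn
  rw [four_pow_mul_rpow_xiSum_eq n hk, mul_pow]
  ring

noncomputable def velocityBound (n k T : ℕ) (Ω σ mmin : ℝ) : ℝ :=
  Cmn k n / ((T : ℝ) * Ω) *
    (Real.pi / (dminThreshold n k T Ω σ mmin * (T : ℝ) * Ω)) ^ (2 * n - 2) * (σ / mmin)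

theorem velocityBound_eq_four_div_angleScale_mul {n : ℕ} (hn : 1 ≤ n) {k : ℕ} (hk : 2 ≤ k)
    (T : ℕ) (Ω σ mmin : ℝ) :
    velocityBound n k T Ω σ mmin = 4 / angleScale n k * velocityBound n (k - 1) T Ω σ mmin := by
  have hfactor : 4 / angleScale n k ≠ 0 := (div_pos four_pos (angleScale_pos n k)).ne'
  unfold velocityBound
  rw [Cmn_eq_four_div_angleScale_pow_mul n hk, dminThreshold_eq_four_div_angleScale_mul n hk]
  generalize 4 / angleScale n k = L at hfactor ⊢
  set X := dminThreshold n (k - 1) T Ω σ mmin * T * Ω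
  rw [show 2 * n - 1 = 2 * n - 2 + 1 by omega, pow_succ, mul_assoc L, mul_assoc L,
    show π / (L * X) = π / X / L by rw [div_div, mul_comm X], div_pow (π / X)]
  field_simp

theorem dimension_lifting_velocity_estimates_general
    (n k T : ℕ) (hn : 2 ≤ n) (hk : 2 ≤ k)
    (Ω σ mmin : ℝ)
    (u v₁ v₂ : EuclideanSpace ℝ (Fin k))
    (hv₁ : ‖v₁‖ = 1) (hv₂ : ‖v₂‖ = 1)
    (hip : 0 ≤ (inner ℝ v₁ v₂ : ℝ))
    (hangle : (inner ℝ v₁ v₂ : ℝ) ≤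
      Real.cos (Real.pi / 4 *
        ((2 : ℝ) / (((n : ℝ) + 1) * ((n : ℝ) + 2))) ^ ((1 : ℝ) / ((k : ℝ) - 1))))
    (h1a : ‖(Submodule.orthogonalProjectionOnto (Submodule.span ℝ {v₁})ᗮ u :
        EuclideanSpace ℝ (Fin k))‖ < dminThreshold n (k - 1) T Ω σ mmin / 2)
    (h2a : ‖(Submodule.orthogonalProjectionOnto (Submodule.span ℝ {v₂})ᗮ u :
        EuclideanSpace ℝ (Fin k))‖ < dminThreshold n (k - 1) T Ω σ mmin / 2)
    (h1b : ‖(Submodule.orthogonalProjectionOnto (Submodule.span ℝ {v₁})ᗮ u :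
        EuclideanSpace ℝ (Fin k))‖ ≤
      Cmn (k - 1) n / ((T : ℝ) * Ω) *
        (Real.pi / (dminThreshold n (k - 1) T Ω σ mmin * (T : ℝ) * Ω)) ^ (2 * n - 2) *
        (σ / mmin))
    (h2b : ‖(Submodule.orthogonalProjectionOnto (Submodule.span ℝ {v₂})ᗮ u :
        EuclideanSpace ℝ (Fin k))‖ ≤
      Cmn (k - 1) n / ((T : ℝ) * Ω) *
        (Real.pi / (dminThreshold n (k - 1) T Ω σ mmin * (T : ℝ) * Ω)) ^ (2 * n - 2) *
        (σ / mmin)) :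
    ‖u‖ < dminThreshold n k T Ω σ mmin / 2 ∧
    ‖u‖ ≤ Cmn k n / ((T : ℝ) * Ω) *
        (Real.pi / (dminThreshold n k T Ω σ mmin * (T : ℝ) * Ω)) ^ (2 * n - 2) *
        (σ / mmin) := by
  have hfactor : 0 < 4 / angleScale n k := div_pos four_pos (angleScale_pos n k)
  have hu := norm_le_four_div_mul_max_of_inner_le_cos hv₁ hv₂ (angleScale_pos n k)
    (angleScale_le_one n (by omega)) hip hangle u
  constructor
  · rw [dminThreshold_eq_four_div_angleScale_mul n hk, mul_div_assoc]
    exact hu.trans_lt (mul_lt_mul_of_pos_left (max_lt h1a h2a) hfactor)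
  · change ‖u‖ ≤ velocityBound n k T Ω σ mmin
    rw [velocityBound_eq_four_div_angleScale_mul (by omega) hk]
    exact hu.trans (mul_le_mul_of_nonneg_left (max_le h1b h2b) hfactor.le)

/-- Lemma 8.6: dimension-lifting of the velocity estimates. -/
theorem dimension_lifting_velocity_estimates
    (n k T : ℕ) (hn : 2 ≤ n) (hk : 2 ≤ k) (hT : 1 ≤ T)
    (Ω σ mmin : ℝ) (hΩ : 0 < Ω) (hσ : 0 < σ) (hmmin : 0 < mmin)
    (u v₁ v₂ : EuclideanSpace ℝ (Fin k))
    (hv₁ : ‖v₁‖ = 1) (hv₂ : ‖v₂‖ = 1)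
    (hip : 0 ≤ (inner ℝ v₁ v₂ : ℝ))
    (hangle : (inner ℝ v₁ v₂ : ℝ) ≤
      Real.cos (Real.pi / 4 *
        ((2 : ℝ) / (((n : ℝ) + 1) * ((n : ℝ) + 2))) ^ ((1 : ℝ) / ((k : ℝ) - 1))))
    (h1a : ‖(Submodule.orthogonalProjectionOnto (Submodule.span ℝ {v₁})ᗮ u :
        EuclideanSpace ℝ (Fin k))‖ < dminThreshold n (k - 1) T Ω σ mmin / 2)
    (h2a : ‖(Submodule.orthogonalProjectionOnto (Submodule.span ℝ {v₂})ᗮ u :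
        EuclideanSpace ℝ (Fin k))‖ < dminThreshold n (k - 1) T Ω σ mmin / 2)
    (h1b : ‖(Submodule.orthogonalProjectionOnto (Submodule.span ℝ {v₁})ᗮ u :
        EuclideanSpace ℝ (Fin k))‖ ≤
      Cmn (k - 1) n / ((T : ℝ) * Ω) *
        (Real.pi / (dminThreshold n (k - 1) T Ω σ mmin * (T : ℝ) * Ω)) ^ (2 * n - 2) *
        (σ / mmin))
    (h2b : ‖(Submodule.orthogonalProjectionOnto (Submodule.span ℝ {v₂})ᗮ u :
        EuclideanSpace ℝ (Fin k))‖ ≤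
      Cmn (k - 1) n / ((T : ℝ) * Ω) *
        (Real.pi / (dminThreshold n (k - 1) T Ω σ mmin * (T : ℝ) * Ω)) ^ (2 * n - 2) *
        (σ / mmin)) :
    ‖u‖ < dminThreshold n k T Ω σ mmin / 2 ∧
    ‖u‖ ≤ Cmn k n / ((T : ℝ) * Ω) *
        (Real.pi / (dminThreshold n k T Ω σ mmin * (T : ℝ) * Ω)) ^ (2 * n - 2) *
        (σ / mmin) :=
  dimension_lifting_velocity_estimates_general n k T hn hk Ω σ mmin u v₁ v₂ hv₁ hv₂ hip hangle h1a
    h2a h1b h2b
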